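/- For every word I with letters in {0,1,2,3} and every c ∈ {1,2,3}, there exist smooth functions ρ_J : K → ℝ, indexed by the words J with letters in {0,1,2,3} and |J| ≤ |I|, such that: (i) for every smooth function u defined on the future light cone K and every (t,x) ∈ K, ∂^I(∂̄_c u)(t,x) − ∂̄_c(∂^I u)(t,x) = t^{−1} Σ_{|J| ≤ |I|} ρ_J(t,x) ∂^J u(t,x); and (ii) for all words I₁ (letters in {0,1,2,3}) and J₁ (letters in {1,2,3}) there is a constant C, depending on I, J, I₁, J₁, with |∂^{I₁} L^{J₁} ρ_J(t,x)| ≤ C t^{−|I₁|} for all (t,x) ∈ K. -/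

import Mathlib

noncomputable section

/-- Spatial part: Euclidean 3-space. -/
abbrev E3 : Type := EuclideanSpace ℝ (Fin 3)

/-- Spacetime points `(t, x) ∈ ℝ × ℝ³`. -/
abbrev Spt : Type := ℝ × E3

/-- Time derivative `∂_t`. -/
def dt (u : Spt → ℝ) : Spt → ℝ := fun p => fderiv ℝ u p (1, 0)

/-- Spatial derivative `∂_a`, `a = 1,2,3`. -/
def dx (a : Fin 3) (u : Spt → ℝ) : Spt → ℝ :=
  fun p => fderiv ℝ u p (0, EuclideanSpace.single a 1)

/-- `∂_α` for `α ∈ {0,1,2,3}`, with `∂_0 = ∂_t`. -/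
def pd : Fin 4 → (Spt → ℝ) → Spt → ℝ := ![dt, dx 0, dx 1, dx 2]

/-- Iterated derivatives `∂^I` for a word `I` in `{0,1,2,3}`. -/
def pdW : List (Fin 4) → (Spt → ℝ) → Spt → ℝ
  | [], u => u
  | α :: I, u => pd α (pdW I u)

/-- Lorentz boost `L_a = x^a ∂_t + t ∂_a`. -/
def lb (a : Fin 3) (u : Spt → ℝ) : Spt → ℝ :=
  fun p => p.2 a * dt u p + p.1 * dx a u p

/-- Iterated Lorentz boosts `L^J` for a word `J` in `{1,2,3}`. -/
def lbW : List (Fin 3) → (Spt → ℝ) → Spt → ℝ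
  | [], u => u
  | a :: J, u => lb a (lbW J u)

/-- Semi-hyperboloidal derivative `∂̄_a = (x^a/t) ∂_t + ∂_a`. -/
def shd (a : Fin 3) (u : Spt → ℝ) : Spt → ℝ :=
  fun p => (p.2 a / p.1) * dt u p + dx a u p

/-- The `Finset` of all words over the alphabet `k` of length at most `n`. -/
def wordsLe (k : Type) [DecidableEq k] [Fintype k] : ℕ → Finset (List k)
  | 0 => {[]}
  | n + 1 => wordsLe k n ∪ (Finset.univ ×ˢ wordsLe k n).image fun q => q.1 :: q.2

/-- The future light cone `K = {(t,x) : |x| < t − 1}`. -/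
def lightCone : Set Spt := {p : Spt | ‖p.2‖ < p.1 - 1}

/-!
The coefficients are taken in the algebra generated by `t⁻¹` and the `x^a / t`. Each `∂_α` maps
this algebra into `t⁻¹` times itself and each boost `L_a` maps it into itself; since the algebra
is bounded on `K`, every `∂^{I₁} L^{J₁} ρ` is `O(t^{-|I₁|})` there.

The commutator formula follows by induction on `I`. Applying `∂_α` to
`∂^I ∂̄_c u = ∂̄_c ∂^I u + t⁻¹ P u` and using `[∂_α, ∂̄_c] v = ∂_α(x^c/t) ∂_t v` (symmetry of second
derivatives), the new remainder is `t⁻¹ (t ∂_α(x^c/t) ∂_t ∂^I u - (∂_α t) t⁻¹ P u + ∂_α (P u))`,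
and differentiating an operator of order `n` with coefficients in the algebra gives one of order
`n + 1`.
-/

open Finset

theorem ContDiffOn.differentiableAt_of_isOpen {E F : Type*} [NormedAddCommGroup E]
    [NormedSpace ℝ E] [NormedAddCommGroup F] [NormedSpace ℝ F] {f : E → F} {s : Set E}
    {x : E} {n : WithTop ℕ∞} (h : ContDiffOn ℝ n f s) (hn : n ≠ 0) (hs : IsOpen s)
    (hx : x ∈ s) : DifferentiableAt ℝ f x :=
  (h.differentiableOn hn).differentiableAt (hs.mem_nhds hx)

theorem mem_wordsLe {k : Type} [DecidableEq k] [Fintype k] {n : ℕ} {J : List k} :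
    J ∈ wordsLe k n ↔ J.length ≤ n := by
  induction n generalizing J with
  | zero => simp [wordsLe]
  | succ n ih =>
    cases J with
    | nil => simp [wordsLe, ih]
    | cons a J =>
      simp only [wordsLe, mem_union, ih, List.length_cons, mem_image, mem_product, mem_univ,
        true_and, List.cons.injEq, Prod.exists, exists_eq_right_right, exists_eq_right]
      omega

theorem wordsLe_mono {k : Type} [DecidableEq k] [Fintype k] {m n : ℕ} (h : m ≤ n) :
    wordsLe k m ⊆ wordsLe k n :=
  fun _ hJ => mem_wordsLe.2 ((mem_wordsLe.1 hJ).trans h)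

def pdDir : Fin 4 → Spt :=
  ![(1, 0), (0, EuclideanSpace.single 0 1), (0, EuclideanSpace.single 1 1),
    (0, EuclideanSpace.single 2 1)]

theorem pd_eq_fderiv (α : Fin 4) (u : Spt → ℝ) (p : Spt) :
    pd α u p = fderiv ℝ u p (pdDir α) := by
  fin_cases α <;> rfl

theorem pd_zero : pd 0 = dt := rfl

theorem pd_succ (a : Fin 3) : pd a.succ = dx a := by
  fin_cases a <;> rfl

def futureHalfSpace : Set Spt := {p | 0 < p.1}

theorem isOpen_futureHalfSpace : IsOpen futureHalfSpace :=
  isOpen_lt continuous_const continuous_fst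

theorem isOpen_lightCone : IsOpen lightCone :=
  isOpen_lt continuous_snd.norm (continuous_fst.sub continuous_const)

theorem one_lt_fst_of_mem_lightCone {p : Spt} (hp : p ∈ lightCone) : 1 < p.1 := by
  have : ‖p.2‖ < p.1 - 1 := hp
  linarith [norm_nonneg p.2]

theorem lightCone_subset_futureHalfSpace : lightCone ⊆ futureHalfSpace :=
  fun _ hp => zero_lt_one.trans (one_lt_fst_of_mem_lightCone hp)

section Calculus

variable {f g : Spt → ℝ} {p : Spt}

theorem pd_add (hf : DifferentiableAt ℝ f p) (hg : DifferentiableAt ℝ g p) (α : Fin 4) :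
    pd α (fun q => f q + g q) p = pd α f p + pd α g p := by
  simp [pd_eq_fderiv, fderiv_fun_add hf hg]

theorem pd_mul (hf : DifferentiableAt ℝ f p) (hg : DifferentiableAt ℝ g p) (α : Fin 4) :
    pd α (fun q => f q * g q) p = f p * pd α g p + g p * pd α f p := by
  simp [pd_eq_fderiv, fderiv_fun_mul hf hg]

theorem pd_const (r : ℝ) (α : Fin 4) : pd α (fun _ => r) p = 0 := by
  simp [pd_eq_fderiv]

theorem pd_sum {ι : Type*} (s : Finset ι) {f : ι → Spt → ℝ}
    (hf : ∀ i ∈ s, DifferentiableAt ℝ (f i) p) (α : Fin 4) :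
    pd α (fun q => ∑ i ∈ s, f i q) p = ∑ i ∈ s, pd α (f i) p := by
  simp [pd_eq_fderiv, fderiv_fun_sum hf]

theorem pd_congr {s : Set Spt} (hs : IsOpen s) (h : Set.EqOn f g s) (hp : p ∈ s) (α : Fin 4) :
    pd α f p = pd α g p := by
  rw [pd_eq_fderiv, pd_eq_fderiv, (h.eventuallyEq_of_mem (hs.mem_nhds hp)).fderiv_eq]

theorem pd_inv_fst (hp : p.1 ≠ 0) (α : Fin 4) :
    pd α (fun q : Spt => q.1⁻¹) p = -(pdDir α).1 * p.1⁻¹ ^ 2 := by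
  have h : HasFDerivAt (fun q : Spt => q.1⁻¹)
      ((-(p.1 ^ 2)⁻¹) • ContinuousLinearMap.fst ℝ ℝ E3) p :=
    (hasDerivAt_inv hp).comp_hasFDerivAt p hasFDerivAt_fst
  rw [pd_eq_fderiv, h.fderiv, smul_apply, ContinuousLinearMap.coe_fst',
    smul_eq_mul]
  ring

theorem differentiableAt_inv_fst (hp : p.1 ≠ 0) :
    DifferentiableAt ℝ (fun q : Spt => q.1⁻¹) p :=
  differentiableAt_fst.inv hp

theorem pd_inv_fst_pow (hp : p.1 ≠ 0) (α : Fin 4) (n : ℕ) :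
    pd α (fun q : Spt => q.1⁻¹ ^ n) p = -(n : ℝ) * (pdDir α).1 * p.1⁻¹ ^ (n + 1) := by
  induction n with
  | zero => simpa using pd_const 1 α
  | succ n ih =>
    simp only [pow_succ]
    rw [pd_mul ((differentiableAt_inv_fst hp).fun_pow n) (differentiableAt_inv_fst hp),
      pd_inv_fst hp, ih]
    push_cast
    ring

theorem pd_coord (a : Fin 3) (α : Fin 4) : pd α (fun q : Spt => q.2 a) p = (pdDir α).2 a := by
  rw [pd_eq_fderiv]
  exact congrArg (· (pdDir α))
    ((EuclideanSpace.proj (𝕜 := ℝ) a).comp (ContinuousLinearMap.snd ℝ ℝ E3)).fderiv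

end Calculus

section Smoothness

variable {s : Set Spt} {u : Spt → ℝ}

theorem pd_contDiffOn (hs : IsOpen s) (hu : ContDiffOn ℝ (⊤ : ℕ∞) u s) (α : Fin 4) :
    ContDiffOn ℝ (⊤ : ℕ∞) (pd α u) s := by
  rw [funext (pd_eq_fderiv α u)]
  exact (hu.fderiv_of_isOpen hs (by simp)).clm_apply contDiffOn_const

theorem pdW_contDiffOn (hs : IsOpen s) (hu : ContDiffOn ℝ (⊤ : ℕ∞) u s) (I : List (Fin 4)) :
    ContDiffOn ℝ (⊤ : ℕ∞) (pdW I u) s := by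
  induction I with
  | nil => exact hu
  | cons α I ih => exact pd_contDiffOn hs ih α

theorem pd_comm (hs : IsOpen s) (hu : ContDiffOn ℝ (⊤ : ℕ∞) u s) {p : Spt} (hp : p ∈ s)
    (α β : Fin 4) : pd α (pd β u) p = pd β (pd α u) p := by
  have hsymm : IsSymmSndFDerivAt ℝ u p :=
    (hu.contDiffAt (hs.mem_nhds hp)).isSymmSndFDerivAt <| by
      rw [minSmoothness_of_isRCLikeNormedField]
      exact WithTop.coe_le_coe.2 le_top
  have hu' : ContDiffOn ℝ (⊤ : ℕ∞) (fderiv ℝ u) s := hu.fderiv_of_isOpen hs (by simp)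
  have hdiff : DifferentiableAt ℝ (fderiv ℝ u) p :=
    hu'.differentiableAt_of_isOpen (by simp) hs hp
  have hsecond (γ δ : Fin 4) :
      pd γ (pd δ u) p = fderiv ℝ (fderiv ℝ u) p (pdDir γ) (pdDir δ) := by
    rw [pd_eq_fderiv, funext (pd_eq_fderiv δ u),
      fderiv_clm_apply hdiff (differentiableAt_const (pdDir δ))]
    simp
  rw [hsecond, hsecond, hsymm]

end Smoothness

inductive IsCoeff : (Spt → ℝ) → Prop
  | const (r : ℝ) : IsCoeff fun _ => r
  | inv_fst : IsCoeff fun p => p.1⁻¹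
  | coord_mul_inv_fst (a : Fin 3) : IsCoeff fun p => p.2 a * p.1⁻¹
  | add {f g : Spt → ℝ} : IsCoeff f → IsCoeff g → IsCoeff fun p => f p + g p
  | mul {f g : Spt → ℝ} : IsCoeff f → IsCoeff g → IsCoeff fun p => f p * g p

namespace IsCoeff

variable {f : Spt → ℝ}

theorem ite (P : Prop) [Decidable P] (hf : IsCoeff f) : IsCoeff (if P then f else 0) := by
  split_ifs
  exacts [hf, const 0]

theorem contDiffOn (hf : IsCoeff f) : ContDiffOn ℝ (⊤ : ℕ∞) f futureHalfSpace := by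
  have hinv : ContDiffOn ℝ (⊤ : ℕ∞) (fun p : Spt => p.1⁻¹) futureHalfSpace :=
    contDiff_fst.contDiffOn.inv fun _ hp => ne_of_gt hp
  induction hf with
  | const r => exact contDiffOn_const
  | inv_fst => exact hinv
  | coord_mul_inv_fst a =>
    exact ((EuclideanSpace.proj (𝕜 := ℝ) a).contDiff.comp contDiff_snd).contDiffOn.mul hinv
  | add _ _ ihf ihg => exact ihf.add ihg
  | mul _ _ ihf ihg => exact ihf.mul ihg

theorem differentiableAt (hf : IsCoeff f) {p : Spt} (hp : 0 < p.1) : DifferentiableAt ℝ f p :=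
  hf.contDiffOn.differentiableAt_of_isOpen (by simp) isOpen_futureHalfSpace hp

theorem pd_eq_inv_fst_mul (hf : IsCoeff f) (α : Fin 4) :
    ∃ g, IsCoeff g ∧ ∀ p : Spt, 0 < p.1 → pd α f p = p.1⁻¹ * g p := by
  induction hf with
  | const r => exact ⟨fun _ => 0, const 0, fun p _ => by simp [pd_const]⟩
  | inv_fst =>
    refine ⟨fun p => -(pdDir α).1 * p.1⁻¹, (const _).mul inv_fst, fun p hp => ?_⟩
    rw [pd_inv_fst hp.ne']
    ring
  | coord_mul_inv_fst a =>
    refine ⟨fun p => p.2 a * p.1⁻¹ * -(pdDir α).1 + (pdDir α).2 a,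
      ((coord_mul_inv_fst a).mul (const _)).add (const _), fun p hp => ?_⟩
    have hcoord : DifferentiableAt ℝ (fun q : Spt => q.2 a) p :=
      ((EuclideanSpace.proj (𝕜 := ℝ) a).differentiableAt).comp p differentiableAt_snd
    rw [pd_mul hcoord (differentiableAt_inv_fst hp.ne'), pd_inv_fst hp.ne', pd_coord]
    ring
  | @add f g hf hg ihf ihg =>
    obtain ⟨f', hf', hff'⟩ := ihf
    obtain ⟨g', hg', hgg'⟩ := ihg
    refine ⟨fun p => f' p + g' p, hf'.add hg', fun p hp => ?_⟩
    rw [pd_add (hf.differentiableAt hp) (hg.differentiableAt hp), hff' p hp, hgg' p hp]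
    ring
  | @mul f g hf hg ihf ihg =>
    obtain ⟨f', hf', hff'⟩ := ihf
    obtain ⟨g', hg', hgg'⟩ := ihg
    refine ⟨fun p => f p * g' p + g p * f' p, (hf.mul hg').add (hg.mul hf'), fun p hp => ?_⟩
    rw [pd_mul (hf.differentiableAt hp) (hg.differentiableAt hp), hff' p hp, hgg' p hp]
    ring

theorem lb (hf : IsCoeff f) (a : Fin 3) :
    ∃ g, IsCoeff g ∧ Set.EqOn (lb a f) g futureHalfSpace := by
  obtain ⟨g₀, hg₀, hfg₀⟩ := hf.pd_eq_inv_fst_mul 0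
  obtain ⟨gₐ, hgₐ, hfgₐ⟩ := hf.pd_eq_inv_fst_mul a.succ
  refine ⟨fun p => p.2 a * p.1⁻¹ * g₀ p + gₐ p,
    ((coord_mul_inv_fst a).mul hg₀).add hgₐ, fun p hp => ?_⟩
  have hp' : 0 < p.1 := hp
  simp only [_root_.lb, ← pd_zero, ← pd_succ, hfg₀ p hp', hfgₐ p hp']
  field_simp

theorem lbW (hf : IsCoeff f) (J : List (Fin 3)) :
    ∃ g, IsCoeff g ∧ Set.EqOn (lbW J f) g futureHalfSpace := by
  induction J with
  | nil => exact ⟨f, hf, fun _ _ => rfl⟩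
  | cons a J ih =>
    obtain ⟨g, hg, hfg⟩ := ih
    obtain ⟨g', hg', hgg'⟩ := hg.lb a
    refine ⟨g', hg', fun p hp => ?_⟩
    have hdt : dt (_root_.lbW J f) p = dt g p := by
      simpa only [pd_zero] using pd_congr isOpen_futureHalfSpace hfg hp 0
    have hdx : dx a (_root_.lbW J f) p = dx a g p := by
      simpa only [pd_succ] using pd_congr isOpen_futureHalfSpace hfg hp a.succ
    show p.2 a * dt (_root_.lbW J f) p + p.1 * dx a (_root_.lbW J f) p = g' p
    rw [hdt, hdx]
    exact hgg' hp

theorem pdW_eq_inv_fst_pow_mul {h : Spt → ℝ} (hh : IsCoeff h)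
    (hfh : Set.EqOn f h futureHalfSpace) (I : List (Fin 4)) :
    ∃ g, IsCoeff g ∧ ∀ p : Spt, 0 < p.1 → pdW I f p = p.1⁻¹ ^ I.length * g p := by
  induction I with
  | nil => exact ⟨h, hh, fun p hp => by simpa [pdW] using hfh hp⟩
  | cons α I ih =>
    obtain ⟨g, hg, hfg⟩ := ih
    obtain ⟨g', hg', hgg'⟩ := hg.pd_eq_inv_fst_mul α
    refine ⟨fun p => -(I.length : ℝ) * (pdDir α).1 * g p + g' p, ((const _).mul hg).add hg',
      fun p hp => ?_⟩
    have hne : p.1 ≠ 0 := hp.ne'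
    rw [pdW, pd_congr isOpen_futureHalfSpace (fun q hq => hfg q hq) hp α,
      pd_mul ((differentiableAt_inv_fst hne).fun_pow _) (hg.differentiableAt hp),
      pd_inv_fst_pow hne, hgg' p hp, List.length_cons]
    ring

theorem exists_bound_on_lightCone (hf : IsCoeff f) : ∃ C, 0 ≤ C ∧ ∀ p ∈ lightCone, |f p| ≤ C := by
  induction hf with
  | const r => exact ⟨|r|, abs_nonneg r, fun _ _ => le_rfl⟩
  | inv_fst =>
    refine ⟨1, zero_le_one, fun p hp => ?_⟩
    have h1 := one_lt_fst_of_mem_lightCone hp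
    rw [abs_of_pos (inv_pos.2 (zero_lt_one.trans h1))]
    exact inv_le_one_of_one_le₀ h1.le
  | coord_mul_inv_fst a =>
    refine ⟨1, zero_le_one, fun p hp => ?_⟩
    have ht : 0 < p.1 := zero_lt_one.trans (one_lt_fst_of_mem_lightCone hp)
    have hx : |p.2 a| ≤ p.1 := by
      have : ‖p.2‖ < p.1 - 1 := hp
      linarith [PiLp.norm_apply_le p.2 a, Real.norm_eq_abs (p.2 a)]
    rw [abs_mul, abs_inv, abs_of_pos ht, ← div_eq_mul_inv]
    exact div_le_one_of_le₀ hx ht.le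
  | add _ _ ihf ihg =>
    obtain ⟨C₁, hC₁, hf⟩ := ihf
    obtain ⟨C₂, hC₂, hg⟩ := ihg
    exact ⟨C₁ + C₂, add_nonneg hC₁ hC₂, fun p hp =>
      (abs_add_le _ _).trans (add_le_add (hf p hp) (hg p hp))⟩
  | mul _ _ ihf ihg =>
    obtain ⟨C₁, hC₁, hf⟩ := ihf
    obtain ⟨C₂, hC₂, hg⟩ := ihg
    exact ⟨C₁ * C₂, mul_nonneg hC₁ hC₂, fun p hp =>
      (abs_mul _ _).trans_le (mul_le_mul (hf p hp) (hg p hp) (abs_nonneg _) hC₁)⟩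

theorem exists_abs_pdW_lbW_le (hf : IsCoeff f) (I₁ : List (Fin 4)) (J₁ : List (Fin 3)) :
    ∃ C : ℝ, ∀ p ∈ lightCone,
      |pdW I₁ (_root_.lbW J₁ f) p| ≤ C * p.1 ^ (-(I₁.length : ℝ)) := by
  obtain ⟨h, hh, hfh⟩ := hf.lbW J₁
  obtain ⟨g, hg, hfg⟩ := hh.pdW_eq_inv_fst_pow_mul hfh I₁
  obtain ⟨C, -, hC⟩ := hg.exists_bound_on_lightCone
  refine ⟨C, fun p hp => ?_⟩
  have ht : 0 < p.1 := lightCone_subset_futureHalfSpace hp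
  rw [hfg p ht, Real.rpow_neg ht.le, Real.rpow_natCast, ← inv_pow, abs_mul,
    abs_of_pos (pow_pos (inv_pos.2 ht) _), mul_comm]
  exact mul_le_mul_of_nonneg_right (hC p hp) (pow_pos (inv_pos.2 ht) _).le

end IsCoeff

def IsCoeffDiffOp (n : ℕ) (P : (Spt → ℝ) → Spt → ℝ) : Prop :=
  ∃ ρ : List (Fin 4) → Spt → ℝ, (∀ J, IsCoeff (ρ J)) ∧
    ∀ u, ContDiffOn ℝ (⊤ : ℕ∞) u lightCone →
      Set.EqOn (P u) (fun p => ∑ J ∈ wordsLe (Fin 4) n, ρ J p * pdW J u p) lightCone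

namespace IsCoeffDiffOp

variable {m n : ℕ} {P Q : (Spt → ℝ) → Spt → ℝ}

theorem congr (hP : IsCoeffDiffOp n P)
    (hQP : ∀ u, ContDiffOn ℝ (⊤ : ℕ∞) u lightCone → Set.EqOn (Q u) (P u) lightCone) :
    IsCoeffDiffOp n Q :=
  let ⟨ρ, hρ, hPρ⟩ := hP
  ⟨ρ, hρ, fun u hu => (hQP u hu).trans (hPρ u hu)⟩

theorem contDiffOn (hP : IsCoeffDiffOp n P) {u : Spt → ℝ}
    (hu : ContDiffOn ℝ (⊤ : ℕ∞) u lightCone) :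
    ContDiffOn ℝ (⊤ : ℕ∞) (P u) lightCone := by
  obtain ⟨ρ, hρ, hPρ⟩ := hP
  refine ContDiffOn.congr ?_ (hPρ u hu)
  exact ContDiffOn.sum fun J _ => ((hρ J).contDiffOn.mono lightCone_subset_futureHalfSpace).mul
    (pdW_contDiffOn isOpen_lightCone hu J)

theorem zero : IsCoeffDiffOp n fun _ _ => 0 :=
  ⟨fun _ _ => 0, fun _ => IsCoeff.const 0, fun _ _ _ _ => by simp⟩

theorem add (hP : IsCoeffDiffOp n P) (hQ : IsCoeffDiffOp n Q) :
    IsCoeffDiffOp n fun u p => P u p + Q u p := by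
  obtain ⟨ρ, hρ, hPρ⟩ := hP
  obtain ⟨σ, hσ, hQσ⟩ := hQ
  refine ⟨fun J p => ρ J p + σ J p, fun J => (hρ J).add (hσ J), fun u hu p hp => ?_⟩
  simp only [hPρ u hu hp, hQσ u hu hp, add_mul, sum_add_distrib]

theorem sum {ι : Type*} (s : Finset ι) {P : ι → (Spt → ℝ) → Spt → ℝ}
    (hP : ∀ i ∈ s, IsCoeffDiffOp n (P i)) :
    IsCoeffDiffOp n fun u p => ∑ i ∈ s, P i u p := by
  classical
  induction s using Finset.induction_on with
  | empty => simpa using zero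
  | insert i s hi ih =>
    simp only [sum_insert hi]
    exact (hP i (mem_insert_self i s)).add (ih fun j hj => hP j (mem_insert_of_mem hj))

theorem coeff_mul {g : Spt → ℝ} (hg : IsCoeff g) (hP : IsCoeffDiffOp n P) :
    IsCoeffDiffOp n fun u p => g p * P u p := by
  obtain ⟨ρ, hρ, hPρ⟩ := hP
  refine ⟨fun J p => g p * ρ J p, fun J => hg.mul (hρ J), fun u hu p hp => ?_⟩
  simp only [hPρ u hu hp, mul_sum, mul_assoc]

theorem mono (hmn : m ≤ n) (hP : IsCoeffDiffOp m P) : IsCoeffDiffOp n P := by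
  obtain ⟨ρ, hρ, hPρ⟩ := hP
  refine ⟨fun J => if J ∈ wordsLe (Fin 4) m then ρ J else 0, fun J => (hρ J).ite _,
    fun u hu p hp => ?_⟩
  simp only [hPρ u hu hp, apply_ite (fun f : Spt → ℝ => f p), Pi.zero_apply, ite_mul, zero_mul,
    sum_ite_mem, inter_eq_right.2 (wordsLe_mono hmn)]

theorem monomial {g : Spt → ℝ} (hg : IsCoeff g) {J : List (Fin 4)} (hJ : J.length ≤ n) :
    IsCoeffDiffOp n fun u p => g p * pdW J u p := by
  refine ⟨fun K => if K = J then g else 0, fun K => hg.ite _, fun u _ p _ => ?_⟩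
  simp only [apply_ite (fun f : Spt → ℝ => f p), Pi.zero_apply, ite_mul, zero_mul,
    sum_ite_eq', if_pos (mem_wordsLe.2 hJ)]

theorem pd (hP : IsCoeffDiffOp n P) (α : Fin 4) : IsCoeffDiffOp (n + 1) fun u => pd α (P u) := by
  obtain ⟨ρ, hρ, hPρ⟩ := hP
  choose g hg hρg using fun J => (hρ J).pd_eq_inv_fst_mul α
  have hsum : IsCoeffDiffOp (n + 1) fun u p => ∑ J ∈ wordsLe (Fin 4) n,
      (ρ J p * pdW (α :: J) u p + p.1⁻¹ * g J p * pdW J u p) :=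
    sum _ fun J hJ =>
      (monomial (hρ J) (Nat.succ_le_succ (mem_wordsLe.1 hJ))).add
        (monomial (IsCoeff.inv_fst.mul (hg J)) ((mem_wordsLe.1 hJ).trans n.le_succ))
  refine hsum.congr fun u hu p hp => ?_
  have ht : 0 < p.1 := lightCone_subset_futureHalfSpace hp
  have hdiff (J : List (Fin 4)) : DifferentiableAt ℝ (pdW J u) p :=
    (pdW_contDiffOn isOpen_lightCone hu J).differentiableAt_of_isOpen (by simp) isOpen_lightCone hp
  rw [pd_congr isOpen_lightCone (hPρ u hu) hp α,
    pd_sum (f := fun J q => ρ J q * pdW J u q) _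
      (fun J _ => ((hρ J).differentiableAt ht).fun_mul (hdiff J)) α]
  refine sum_congr rfl fun J _ => ?_
  rw [pd_mul ((hρ J).differentiableAt ht) (hdiff J), hρg J p ht]
  simp only [pdW]
  ring

end IsCoeffDiffOp

section Commutator

variable {s : Set Spt}

theorem shd_eq (c : Fin 3) (u : Spt → ℝ) :
    shd c u = fun q => q.2 c * q.1⁻¹ * pd 0 u q + pd c.succ u q := by
  funext q
  simp [shd, div_eq_mul_inv, pd_zero, pd_succ]

theorem shd_contDiffOn (hs : IsOpen s) (hs₀ : s ⊆ futureHalfSpace) {u : Spt → ℝ}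
    (hu : ContDiffOn ℝ (⊤ : ℕ∞) u s) (c : Fin 3) :
    ContDiffOn ℝ (⊤ : ℕ∞) (shd c u) s := by
  rw [shd_eq]
  exact (((IsCoeff.coord_mul_inv_fst c).contDiffOn.mono hs₀).mul (pd_contDiffOn hs hu 0)).add
    (pd_contDiffOn hs hu c.succ)

theorem pd_shd (hs : IsOpen s) (hs₀ : s ⊆ futureHalfSpace) {v : Spt → ℝ}
    (hv : ContDiffOn ℝ (⊤ : ℕ∞) v s) {p : Spt} (hp : p ∈ s) (c : Fin 3) (α : Fin 4) :
    pd α (shd c v) p =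
      shd c (pd α v) p + pd α (fun q : Spt => q.2 c * q.1⁻¹) p * pd 0 v p := by
  have hcoeff := (IsCoeff.coord_mul_inv_fst c).differentiableAt (hs₀ hp)
  have hd (β : Fin 4) : DifferentiableAt ℝ (pd β v) p :=
    (pd_contDiffOn hs hv β).differentiableAt_of_isOpen (by simp) hs hp
  rw [shd_eq c v, shd_eq c (pd α v), pd_add (hcoeff.fun_mul (hd 0)) (hd c.succ),
    pd_mul hcoeff (hd 0), pd_comm hs hv hp α 0, pd_comm hs hv hp α c.succ]
  ring

theorem exists_isCoeffDiffOp_commutator (c : Fin 3) (I : List (Fin 4)) :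
    ∃ P, IsCoeffDiffOp I.length P ∧ ∀ u, ContDiffOn ℝ (⊤ : ℕ∞) u lightCone →
      ∀ p ∈ lightCone, pdW I (shd c u) p - shd c (pdW I u) p = p.1⁻¹ * P u p := by
  induction I with
  | nil => exact ⟨fun _ _ => 0, IsCoeffDiffOp.zero, fun u _ p _ => by simp [pdW]⟩
  | cons α I ih =>
    obtain ⟨P, hP, hPI⟩ := ih
    obtain ⟨g, hg, hcg⟩ := (IsCoeff.coord_mul_inv_fst c).pd_eq_inv_fst_mul α
    refine ⟨fun u p => g p * pdW (0 :: I) u p + -(pdDir α).1 * p.1⁻¹ * P u p + pd α (P u) p,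
      ((IsCoeffDiffOp.monomial hg le_rfl).add (IsCoeffDiffOp.coeff_mul
        ((IsCoeff.const _).mul IsCoeff.inv_fst) (hP.mono I.length.le_succ))).add (hP.pd α),
      fun u hu p hp => ?_⟩
    have ht : p.1 ≠ 0 := (lightCone_subset_futureHalfSpace hp).ne'
    have hv := pdW_contDiffOn isOpen_lightCone hu I
    have hI : Set.EqOn (pdW I (shd c u)) (fun q => shd c (pdW I u) q + q.1⁻¹ * P u q)
        lightCone := fun q hq => sub_eq_iff_eq_add'.1 (hPI u hu q hq)
    have hshd : DifferentiableAt ℝ (shd c (pdW I u)) p :=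
      (shd_contDiffOn isOpen_lightCone lightCone_subset_futureHalfSpace hv c
        ).differentiableAt_of_isOpen (by simp) isOpen_lightCone hp
    have hPu : DifferentiableAt ℝ (P u) p :=
      (hP.contDiffOn hu).differentiableAt_of_isOpen (by simp) isOpen_lightCone hp
    show pd α (pdW I (shd c u)) p - shd c (pd α (pdW I u)) p = _
    rw [pd_congr isOpen_lightCone hI hp α,
      pd_add hshd ((differentiableAt_inv_fst ht).fun_mul hPu),
      pd_mul (differentiableAt_inv_fst ht) hPu,
      pd_shd isOpen_lightCone lightCone_subset_futureHalfSpace hv hp c α,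
      hcg p (lightCone_subset_futureHalfSpace hp), pd_inv_fst ht]
    simp only [pdW]
    ring

end Commutator

/-- Commutator of iterated partial derivatives with a semi-hyperboloidal derivative inside
the future light cone: `[∂^I, ∂̄_c] u = t⁻¹ Σ_{|J| ≤ |I|} ρ_J ∂^J u`, where the smooth
coefficients `ρ_J` satisfy `|∂^{I₁} L^{J₁} ρ_J| ≤ C t^{−|I₁|}` in `K`. -/
theorem commutator_pdW_shd (I : List (Fin 4)) (c : Fin 3) :
    ∃ ρf : List (Fin 4) → Spt → ℝ,
      (∀ J : List (Fin 4), ContDiffOn ℝ (⊤ : ℕ∞) (ρf J) lightCone) ∧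
      (∀ u : Spt → ℝ, ContDiffOn ℝ (⊤ : ℕ∞) u lightCone →
        ∀ p ∈ lightCone,
          pdW I (shd c u) p - shd c (pdW I u) p =
            p.1⁻¹ * ∑ J ∈ wordsLe (Fin 4) I.length, ρf J p * pdW J u p) ∧
      (∀ (J : List (Fin 4)) (I₁ : List (Fin 4)) (J₁ : List (Fin 3)),
        ∃ C : ℝ, ∀ p ∈ lightCone,
          |pdW I₁ (lbW J₁ (ρf J)) p| ≤ C * p.1 ^ (-(I₁.length : ℝ))) := by
  obtain ⟨P, ⟨ρ, hρ, hPρ⟩, hcomm⟩ := exists_isCoeffDiffOp_commutator c I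
  exact ⟨ρ, fun J => (hρ J).contDiffOn.mono lightCone_subset_futureHalfSpace,
    fun u hu p hp => by rw [hcomm u hu p hp, hPρ u hu hp],
    fun J I₁ J₁ => (hρ J).exists_abs_pdW_lbW_le I₁ J₁⟩
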